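/- arXiv:1612.08847 — 2 statements merged into one kernel-verified Lean document; each statement's English description precedes it below -/
import Mathlib

section
/- Let n ≥ 1, j ∈ {0,…,n-2}, and let u₀, u₁, …, u_{n-j-1} be an orthonormal basis of an (n-j)-dimensional subspace of ℝⁿ. Define C(u₀, τ) = pos{u₀ ± τ·u₁, …, u₀ ± τ·u_{n-j-1}} for τ ∈ (0,1). Then every unit vector v ∈ C(u₀, τ) satisfies ⟨v, u₀⟩ ≥ 1/√(1 + τ²). -/
/-! Every cone element is `v = S • u₀ + ∑ τ (aᵢ - bᵢ) • uᵢ` with `S = ∑ (aᵢ + bᵢ) = ⟪v, u₀⟫`. By Pythagoras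
`‖v‖² = S² + τ² ∑ (aᵢ - bᵢ)²`, and `∑ (aᵢ - bᵢ)² ≤ (∑ (aᵢ + bᵢ))² = S²` for nonnegative weights, so
`‖v‖ ≤ √(1 + τ²) ⟪v, u₀⟫`. -/

open scoped RealInnerProductSpace

open Finset

section

variable {ι E : Type*} [NormedAddCommGroup E] [InnerProductSpace ℝ E]

theorem sum_sq_sub_le_sq_sum_add {s : Finset ι} {a b : ι → ℝ} (ha : ∀ i ∈ s, 0 ≤ a i)
    (hb : ∀ i ∈ s, 0 ≤ b i) : ∑ i ∈ s, (a i - b i) ^ 2 ≤ (∑ i ∈ s, (a i + b i)) ^ 2 :=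
  calc ∑ i ∈ s, (a i - b i) ^ 2
      ≤ ∑ i ∈ s, (a i + b i) ^ 2 :=
        sum_le_sum fun i hi => by nlinarith [mul_nonneg (ha i hi) (hb i hi)]
    _ ≤ (∑ i ∈ s, (a i + b i)) ^ 2 :=
        sum_sq_le_sq_sum_of_nonneg fun i hi => add_nonneg (ha i hi) (hb i hi)

theorem sum_smul_add_smul_sub_eq (s : Finset ι) (a b : ι → ℝ) (x : E) (y : ι → E) (τ : ℝ) :
    ∑ i ∈ s, (a i • (x + τ • y i) + b i • (x - τ • y i)) =
      (∑ i ∈ s, (a i + b i)) • x + ∑ i ∈ s, (τ * (a i - b i)) • y i := by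
  rw [sum_smul, ← sum_add_distrib]
  exact sum_congr rfl fun i _ => by module

namespace Orthonormal

variable {u : ι → E} {i₀ : ι} {s : Finset ι}

theorem inner_sum_smul_eq_zero_of_notMem (hu : Orthonormal ℝ u) (hi₀ : i₀ ∉ s) (c : ι → ℝ) :
    ⟪u i₀, ∑ i ∈ s, c i • u i⟫ = 0 := by
  rw [inner_sum]
  exact sum_eq_zero fun i hi => by
    rw [inner_smul_right, hu.inner_eq_zero (ne_of_mem_of_not_mem hi hi₀).symm, mul_zero]

theorem inner_smul_add_sum_smul (hu : Orthonormal ℝ u) (hi₀ : i₀ ∉ s) (S : ℝ) (c : ι → ℝ) :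
    ⟪S • u i₀ + ∑ i ∈ s, c i • u i, u i₀⟫ = S := by
  rw [inner_add_left, real_inner_smul_left, real_inner_comm (u i₀) (∑ i ∈ s, c i • u i),
    hu.inner_sum_smul_eq_zero_of_notMem hi₀, real_inner_self_eq_norm_sq, hu.norm_eq_one]
  ring

theorem norm_smul_add_sum_smul_sq (hu : Orthonormal ℝ u) (hi₀ : i₀ ∉ s) (S : ℝ) (c : ι → ℝ) :
    ‖S • u i₀ + ∑ i ∈ s, c i • u i‖ ^ 2 = S ^ 2 + ∑ i ∈ s, c i ^ 2 := by
  have horth : ⟪S • u i₀, ∑ i ∈ s, c i • u i⟫ = 0 := by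
    rw [real_inner_smul_left, hu.inner_sum_smul_eq_zero_of_notMem hi₀, mul_zero]
  rw [sq, norm_add_sq_eq_norm_sq_add_norm_sq_real horth, ← real_inner_self_eq_norm_mul_norm,
    ← real_inner_self_eq_norm_mul_norm, hu.inner_sum, real_inner_smul_left, real_inner_smul_right,
    real_inner_self_eq_norm_sq, hu.norm_eq_one]
  simp [sq]

theorem norm_le_sqrt_mul_inner_of_mem_cone (hu : Orthonormal ℝ u) (hi₀ : i₀ ∉ s) (τ : ℝ)
    {a b : ι → ℝ} (ha : ∀ i ∈ s, 0 ≤ a i) (hb : ∀ i ∈ s, 0 ≤ b i) {v : E}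
    (hv : v = ∑ i ∈ s, (a i • (u i₀ + τ • u i) + b i • (u i₀ - τ • u i))) :
    ‖v‖ ≤ √(1 + τ ^ 2) * ⟪v, u i₀⟫ := by
  rw [sum_smul_add_smul_sub_eq] at hv
  set S := ∑ i ∈ s, (a i + b i)
  have hS : 0 ≤ S := sum_nonneg fun i hi => add_nonneg (ha i hi) (hb i hi)
  have hnorm : ‖v‖ ^ 2 ≤ (√(1 + τ ^ 2) * S) ^ 2 :=
    calc ‖v‖ ^ 2 = S ^ 2 + τ ^ 2 * ∑ i ∈ s, (a i - b i) ^ 2 := by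
          simp_rw [hv, hu.norm_smul_add_sum_smul_sq hi₀, mul_pow, mul_sum]
      _ ≤ S ^ 2 + τ ^ 2 * S ^ 2 := by gcongr; exact sum_sq_sub_le_sq_sum_add ha hb
      _ = (√(1 + τ ^ 2) * S) ^ 2 := by rw [mul_pow, Real.sq_sqrt (by positivity)]; ring
  rw [hv, hu.inner_smul_add_sum_smul hi₀, ← hv]
  exact (sq_le_sq₀ (norm_nonneg v) (by positivity)).1 hnorm

end Orthonormal

end

theorem inner_ge_of_mem_cone_general (n j : ℕ) (h0 : 0 < n - j)
    (u : Fin (n - j) → EuclideanSpace ℝ (Fin n)) (hu : Orthonormal ℝ u)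
    (τ : ℝ)
    (v : EuclideanSpace ℝ (Fin n)) (hv : ‖v‖ = 1)
    (hvC : ∃ a b : Fin (n - j) → ℝ, (∀ i, 0 ≤ a i) ∧ (∀ i, 0 ≤ b i) ∧
      v = ∑ i ∈ Finset.univ.erase ⟨0, h0⟩,
            (a i • (u ⟨0, h0⟩ + τ • u i) + b i • (u ⟨0, h0⟩ - τ • u i))) :
    ⟪v, u ⟨0, h0⟩⟫ ≥ 1 / Real.sqrt (1 + τ ^ 2) := by
  obtain ⟨a, b, ha, hb, hvC⟩ := hvC
  have key := hu.norm_le_sqrt_mul_inner_of_mem_cone (notMem_erase _ _) τ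
    (fun i _ => ha i) (fun i _ => hb i) hvC
  rw [hv] at key
  rw [ge_iff_le, div_le_iff₀' (by positivity)]
  exact key

/-- If `u 0, …, u (n-j-1)` is an orthonormal family (spanning an `(n-j)`-dimensional
subspace of `ℝⁿ`), `τ ∈ (0,1)`, and `v` is a unit vector in the positive hull
`C(u₀,τ) = pos{u₀ ± τ·u i : i = 1,…,n-j-1}`, then `⟪v, u₀⟫ ≥ 1/√(1+τ²)`. -/
theorem inner_ge_of_mem_cone (n j : ℕ) (hn : 1 ≤ n) (hj : j ≤ n - 2) (h0 : 0 < n - j)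
    (u : Fin (n - j) → EuclideanSpace ℝ (Fin n)) (hu : Orthonormal ℝ u)
    (τ : ℝ) (hτ : τ ∈ Set.Ioo (0 : ℝ) 1)
    (v : EuclideanSpace ℝ (Fin n)) (hv : ‖v‖ = 1)
    (hvC : ∃ a b : Fin (n - j) → ℝ, (∀ i, 0 ≤ a i) ∧ (∀ i, 0 ≤ b i) ∧
      v = ∑ i ∈ Finset.univ.erase ⟨0, h0⟩,
            (a i • (u ⟨0, h0⟩ + τ • u i) + b i • (u ⟨0, h0⟩ - τ • u i))) :
    ⟪v, u ⟨0, h0⟩⟫ ≥ 1 / Real.sqrt (1 + τ ^ 2) :=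
  inner_ge_of_mem_cone_general n j h0 u hu τ v hv hvC
end

section
/- Let n ≥ 1, j ∈ {0,…,n-2}, and let u₀, u₁, …, u_{n-j-1} be an orthonormal basis of an (n-j)-dimensional subspace of ℝⁿ. Define C(u₀, τ) = pos{u₀ ± τ·u₁, …, u₀ ± τ·u_{n-j-1}} for τ ∈ (0,1). Then every unit vector v ∈ C(u₀, τ) satisfies ‖u₀ − v‖ ≤ √2 · τ. -/
open scoped RealInnerProductSpace

/-!
Writing a point of the cone as `v = s • u₀ + w` with `s = ∑ (aᵢ + bᵢ)` and
`w = ∑ τ (aᵢ - bᵢ) • uᵢ`, we get `w ⊥ u₀` and `‖w‖ ≤ τ s`. For unit `v` this gives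
`1 = s² + ‖w‖² ≤ s² (1 + τ²)`, hence `s ≥ 1 - τ²`, and then
`‖u₀ - v‖² = 2 - 2 s ≤ 2 τ²`.
-/

lemma one_sub_sq_le_of_one_le_sq_mul {s τ : ℝ} (hs : 0 ≤ s) (h : 1 ≤ s ^ 2 * (1 + τ ^ 2)) :
    1 - τ ^ 2 ≤ s := by
  by_contra! hlt
  have hsq : s ^ 2 < (1 - τ ^ 2) ^ 2 := pow_lt_pow_left₀ hlt hs two_ne_zero
  -- `hlt` forces `τ² < 1`, and then `(1 - τ²)² (1 + τ²) = (1 - τ²) (1 - τ⁴) ≤ 1`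
  have hbound : (1 - τ ^ 2) ^ 2 * (1 + τ ^ 2) ≤ 1 := by
    nlinarith [sq_nonneg τ, mul_nonneg (sq_nonneg τ) (sq_nonneg (τ ^ 2))]
  nlinarith [mul_lt_mul_of_pos_right hsq (by positivity : (0 : ℝ) < 1 + τ ^ 2)]

lemma norm_sub_le_sqrt_two_mul_of_eq_smul_add {E : Type*} [NormedAddCommGroup E]
    [InnerProductSpace ℝ E] {x v w : E} {s τ : ℝ} (hx : ‖x‖ = 1) (hv : ‖v‖ = 1)
    (hvw : v = s • x + w) (hxw : ⟪x, w⟫ = 0) (hs : 0 ≤ s) (hτ : 0 ≤ τ) (hw : ‖w‖ ≤ τ * s) :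
    ‖x - v‖ ≤ Real.sqrt 2 * τ := by
  have hxv : ⟪x, v⟫ = s := by
    rw [hvw, inner_add_right, inner_smul_right, hxw, real_inner_self_eq_norm_sq, hx]
    ring
  have hpyth : 1 = s ^ 2 + ‖w‖ ^ 2 := by
    have h := norm_add_sq_eq_norm_sq_add_norm_sq_real
      (show ⟪s • x, w⟫ = 0 by rw [inner_smul_left, hxw, mul_zero])
    rw [← hvw, hv, norm_smul, hx, Real.norm_eq_abs, abs_of_nonneg hs] at h
    nlinarith
  have hs' : 1 - τ ^ 2 ≤ s := one_sub_sq_le_of_one_le_sq_mul hs <| by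
    nlinarith [norm_nonneg w, mul_le_mul hw hw (norm_nonneg w) (mul_nonneg hτ hs)]
  have hsq : ‖x - v‖ ^ 2 ≤ (Real.sqrt 2 * τ) ^ 2 := by
    rw [norm_sub_sq_real, hx, hv, hxv, mul_pow, Real.sq_sqrt zero_le_two]
    linarith
  exact (pow_le_pow_iff_left₀ (norm_nonneg _) (by positivity) two_ne_zero).mp hsq

lemma Finset.sum_smul_add_add_smul_sub {ι R M : Type*} [CommRing R] [AddCommGroup M]
    [Module R M] (s : Finset ι) (a b : ι → R) (τ : R) (x : M) (y : ι → M) :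
    ∑ i ∈ s, (a i • (x + τ • y i) + b i • (x - τ • y i)) =
      (∑ i ∈ s, (a i + b i)) • x + ∑ i ∈ s, (τ * (a i - b i)) • y i := by
  rw [Finset.sum_smul, ← Finset.sum_add_distrib]
  refine Finset.sum_congr rfl fun i _ => ?_
  simp only [smul_add, smul_sub, add_smul, sub_smul, mul_smul, smul_comm (a i) τ,
    smul_comm (b i) τ]
  abel

lemma norm_sum_smul_sub_le {ι E : Type*} [SeminormedAddCommGroup E] [NormedSpace ℝ E]
    (s : Finset ι) {a b : ι → ℝ} (ha : ∀ i, 0 ≤ a i) (hb : ∀ i, 0 ≤ b i) {τ : ℝ} (hτ : 0 ≤ τ)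
    {y : ι → E} (hy : ∀ i, ‖y i‖ ≤ 1) :
    ‖∑ i ∈ s, (τ * (a i - b i)) • y i‖ ≤ τ * ∑ i ∈ s, (a i + b i) := by
  rw [Finset.mul_sum]
  refine norm_sum_le_of_le s fun i _ => ?_
  rw [norm_smul, Real.norm_eq_abs, abs_mul, abs_of_nonneg hτ]
  have hab : |a i - b i| ≤ a i + b i :=
    abs_sub_le_of_nonneg_of_le (ha i) (le_add_of_nonneg_right (hb i)) (hb i)
      (le_add_of_nonneg_left (ha i))
  calc τ * |a i - b i| * ‖y i‖ ≤ τ * |a i - b i| := mul_le_of_le_one_right (by positivity) (hy i)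
    _ ≤ τ * (a i + b i) := by gcongr

theorem dist_le_of_mem_cone_general (n j : ℕ) (h0 : 0 < n - j)
    (u : Fin (n - j) → EuclideanSpace ℝ (Fin n)) (hu : Orthonormal ℝ u)
    (τ : ℝ) (hτ : τ ∈ Set.Ioo (0 : ℝ) 1)
    (v : EuclideanSpace ℝ (Fin n)) (hv : ‖v‖ = 1)
    (hvC : ∃ a b : Fin (n - j) → ℝ, (∀ i, 0 ≤ a i) ∧ (∀ i, 0 ≤ b i) ∧
      v = ∑ i ∈ Finset.univ.erase ⟨0, h0⟩,
            (a i • (u ⟨0, h0⟩ + τ • u i) + b i • (u ⟨0, h0⟩ - τ • u i))) :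
    ‖u ⟨0, h0⟩ - v‖ ≤ Real.sqrt 2 * τ := by
  obtain ⟨a, b, ha, hb, hvsum⟩ := hvC
  rw [Finset.sum_smul_add_add_smul_sub] at hvsum
  refine norm_sub_le_sqrt_two_mul_of_eq_smul_add (hu.1 _) hv hvsum ?_
    (Finset.sum_nonneg fun i _ => add_nonneg (ha i) (hb i)) hτ.1.le
    (norm_sum_smul_sub_le _ ha hb hτ.1.le fun i => (hu.1 i).le)
  rw [inner_sum]
  refine Finset.sum_eq_zero fun i hi => ?_
  rw [inner_smul_right, hu.inner_eq_zero (Finset.ne_of_mem_erase hi).symm, mul_zero]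

/-- If `u 0, …, u (n-j-1)` is an orthonormal family (spanning an `(n-j)`-dimensional
subspace of `ℝⁿ`), `τ ∈ (0,1)`, and `v` is a unit vector in the positive hull
`C(u₀,τ) = pos{u₀ ± τ·u i : i = 1,…,n-j-1}`, then `‖u₀ − v‖ ≤ √2 · τ`. -/
theorem dist_le_of_mem_cone (n j : ℕ) (hn : 1 ≤ n) (hj : j ≤ n - 2) (h0 : 0 < n - j)
    (u : Fin (n - j) → EuclideanSpace ℝ (Fin n)) (hu : Orthonormal ℝ u)
    (τ : ℝ) (hτ : τ ∈ Set.Ioo (0 : ℝ) 1)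
    (v : EuclideanSpace ℝ (Fin n)) (hv : ‖v‖ = 1)
    (hvC : ∃ a b : Fin (n - j) → ℝ, (∀ i, 0 ≤ a i) ∧ (∀ i, 0 ≤ b i) ∧
      v = ∑ i ∈ Finset.univ.erase ⟨0, h0⟩,
            (a i • (u ⟨0, h0⟩ + τ • u i) + b i • (u ⟨0, h0⟩ - τ • u i))) :
    ‖u ⟨0, h0⟩ - v‖ ≤ Real.sqrt 2 * τ :=
  dist_le_of_mem_cone_general n j h0 u hu τ hτ v hv hvC
end
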